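/- Let B be an n×n real symmetric positive definite matrix and let P_1, …, P_n be the associated lumped preconditioners. Then for every i = 1, …, n−1 and every k = 1, …, n, λ_k(B, P_i) ≤ λ_k(B, P_{i+1}); consequently, for any symmetric positive definite matrix K ∈ ℝ^{n×n}, λ_k(K, 𝓛(B)) = λ_k(K, P_1) ≤ λ_k(K, P_2) ≤ … ≤ λ_k(K, P_n) = λ_k(K, B) for all k = 1, …, n. -/

import Mathlib

open Matrix

/-- The Euclidean norm of a vector. -/
noncomputable def enorm {m : Type*} [Fintype m] (v : m → ℝ) : ℝ :=
  Real.sqrt (∑ i, (v i) ^ 2)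

/-- The `k`-th smallest generalized eigenvalue (counted with multiplicity) of the
symmetric pencil `(A, B)` with `B` positive definite, i.e. the `k`-th smallest root of
`det (A - λ B) = 0`.  It is defined as the `k`-th smallest eigenvalue of the Hermitian
matrix `√(B⁻¹) * A * √(B⁻¹)`, which is similar to `B⁻¹ * A`.  Junk value `0` is returned
if `A` is not symmetric or `B` is not positive definite. -/
noncomputable def genEig {m : Type*} [Fintype m] [DecidableEq m]
    (A B : Matrix m m ℝ) (k : Fin (Fintype.card m)) : ℝ :=
  letI := Classical.propDecidable
  if h : A.IsHermitian ∧ B.PosDef then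
    let S : Matrix m m ℝ := open scoped MatrixOrder in CFC.sqrt B⁻¹
    have hS : S.IsHermitian := open scoped MatrixOrder in (CFC.sqrt_nonneg B⁻¹).posSemidef.isHermitian
    have hC : (S * A * S).IsHermitian := by
      show (S * A * S)ᴴ = S * A * S
      rw [conjTranspose_mul, conjTranspose_mul, hS.eq, h.1.eq, Matrix.mul_assoc]
    let f : Fin (Fintype.card m) → ℝ := hC.eigenvalues₀
    f (Tuple.sort f k)
  else 0

/-- The `k`-th smallest generalized eigenvalue of a pencil of `n × n` matrices,
indexed by `Fin n`.  `genEigFin A B 0` is the smallest one, `λ_1(A,B)`, and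
`genEigFin A B (Fin.last _)` is the largest one, `λ_n(A,B)`. -/
noncomputable def genEigFin {n : ℕ} (A B : Matrix (Fin n) (Fin n) ℝ) (k : Fin n) : ℝ :=
  genEig A B (Fin.cast (Fintype.card_fin n).symm k)

/-- The (row-sum) lumping operator: `lump B` is the diagonal matrix whose `i`-th
diagonal entry is the sum of the absolute values of the entries of the `i`-th row of `B`. -/
noncomputable def lump {m : Type*} [Fintype m] [DecidableEq m]
    (B : Matrix m m ℝ) : Matrix m m ℝ :=
  Matrix.diagonal fun i => ∑ j, |B i j|

/-- The banded part `D_i` of a matrix: it keeps all sub- and super-diagonals of index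
smaller than `i` (i.e. the entries with `|j - k| < i`) and sets the rest to zero. -/
def diagBand {n : ℕ} (B : Matrix (Fin n) (Fin n) ℝ) (i : ℕ) : Matrix (Fin n) (Fin n) ℝ :=
  Matrix.of fun j k => if |((j : ℕ) : ℤ) - ((k : ℕ) : ℤ)| < (i : ℤ) then B j k else 0

/-- The lumped preconditioner `P_i = D_i + 𝓛(R_i)` where `B = D_i + R_i`, `D_i` being the
banded part of `B` of bandwidth `i` and `R_i` the remainder. -/
noncomputable def precond {n : ℕ} (B : Matrix (Fin n) (Fin n) ℝ) (i : ℕ) :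
    Matrix (Fin n) (Fin n) ℝ :=
  diagBand B i + lump (B - diagBand B i)


/-!
Lumping dominates a symmetric matrix in the Loewner order, since
`2 xₐ E_ab x_b ≤ |E_ab| (xₐ² + x_b²)`. As `P_i - B = 𝓛(R_i) - R_i` and
`P_i - P_{i+1} = 𝓛(Δ) - Δ` with `Δ = D_{i+1} - D_i`, this gives `B ≤ P_{i+1} ≤ P_i`.

For `A ⪰ 0` the generalized eigenvalues `λ_k(A, P)` decrease as `P` grows, by a Courant–Fischer
argument. Diagonalize simultaneously, `P = RᵀR`, `A = Rᵀ diag(μ) R`, and `Q = SᵀS`,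
`A = Sᵀ diag(ν) S` for `Q ≤ P`. Asking `Rx` to vanish where `μ < λ_k(A,P)` (at most `k`
coordinates) and `Sx` to vanish where `ν > λ_k(A,Q)` (at most `n - 1 - k`) leaves some `x ≠ 0`,
and for it `λ_k(A,P) xᵀPx ≤ xᵀAx ≤ λ_k(A,Q) xᵀQx ≤ λ_k(A,Q) xᵀPx`.
-/

open Finset
open scoped MatrixOrder

lemma Antitone.card_filter_lt_apply_le {α : Type*} [LinearOrder α] {n : ℕ} {f : Fin n → α}
    (hf : Antitone f) (a : Fin n) : #{i | f i < f a} ≤ n - 1 - a :=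
  Fin.card_Ioi a ▸ card_le_card fun _ hi =>
    mem_Ioi.mpr (lt_of_not_ge fun h => (mem_filter.mp hi).2.not_ge (hf h))

lemma Antitone.card_filter_apply_lt_le {α : Type*} [LinearOrder α] {n : ℕ} {f : Fin n → α}
    (hf : Antitone f) (a : Fin n) : #{i | f a < f i} ≤ a :=
  Fin.card_Iio a ▸ card_le_card fun _ hi =>
    mem_Iio.mpr (lt_of_not_ge fun h => (mem_filter.mp hi).2.not_ge (hf h))

section WeightedSums

variable {n : Type*} [Fintype n] {μ y : n → ℝ} {c : ℝ}

lemma mul_sum_sq_le_sum_mul_sq (h : ∀ j, y j ≠ 0 → c ≤ μ j) :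
    c * ∑ j, y j ^ 2 ≤ ∑ j, μ j * y j ^ 2 := by
  rw [mul_sum]
  refine sum_le_sum fun j _ => ?_
  by_cases hj : y j = 0
  · simp [hj]
  · exact mul_le_mul_of_nonneg_right (h j hj) (sq_nonneg _)

lemma sum_mul_sq_le_mul_sum_sq (h : ∀ j, y j ≠ 0 → μ j ≤ c) :
    ∑ j, μ j * y j ^ 2 ≤ c * ∑ j, y j ^ 2 := by
  rw [mul_sum]
  refine sum_le_sum fun j _ => ?_
  by_cases hj : y j = 0
  · simp [hj]
  · exact mul_le_mul_of_nonneg_right (h j hj) (sq_nonneg _)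

end WeightedSums

namespace Matrix

section QuadraticForms

variable {m n : Type*} [Fintype m] [Fintype n]

lemma dotProduct_transpose_mul_mulVec (R : Matrix n m ℝ) (x : m → ℝ) :
    x ⬝ᵥ (Rᵀ * R) *ᵥ x = ∑ j, (R *ᵥ x) j ^ 2 := by
  rw [← mulVec_mulVec, dotProduct_mulVec, vecMul_transpose]
  simp [dotProduct, sq]

lemma dotProduct_transpose_mul_diagonal_mul_mulVec [DecidableEq n] (R : Matrix n m ℝ)
    (μ : n → ℝ) (x : m → ℝ) :
    x ⬝ᵥ (Rᵀ * diagonal μ * R) *ᵥ x = ∑ j, μ j * (R *ᵥ x) j ^ 2 := by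
  rw [← mulVec_mulVec, ← mulVec_mulVec, dotProduct_mulVec, vecMul_transpose]
  simp only [dotProduct, mulVec_diagonal]
  exact sum_congr rfl fun j _ => by ring

lemma exists_ne_zero_mulVec_eq_zero {n₁ n₂ : Type*} [Fintype n₁] [Fintype n₂]
    (R₁ : Matrix n₁ m ℝ) (R₂ : Matrix n₂ m ℝ) (s₁ : Finset n₁) (s₂ : Finset n₂)
    (h : #s₁ + #s₂ < Fintype.card m) :
    ∃ x ≠ 0, (∀ j ∈ s₁, (R₁ *ᵥ x) j = 0) ∧ ∀ j ∈ s₂, (R₂ *ᵥ x) j = 0 := by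
  let f : (m → ℝ) →ₗ[ℝ] (s₁ → ℝ) × (s₂ → ℝ) :=
    (LinearMap.funLeft ℝ ℝ Subtype.val ∘ₗ R₁.mulVecLin).prod
      (LinearMap.funLeft ℝ ℝ Subtype.val ∘ₗ R₂.mulVecLin)
  have hdim :
      Module.finrank ℝ ((s₁ → ℝ) × (s₂ → ℝ)) < Module.finrank ℝ (m → ℝ) := by
    simpa [Module.finrank_prod] using h
  obtain ⟨x, hx, hx0⟩ :=
    Submodule.exists_mem_ne_zero_of_ne_bot (LinearMap.ker_ne_bot_of_finrank_lt hdim)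
  have hfx : f x = 0 := hx
  exact ⟨x, hx0, fun j hj => congrFun (congrArg Prod.fst hfx) ⟨j, hj⟩,
    fun j hj => congrFun (congrArg Prod.snd hfx) ⟨j, hj⟩⟩

end QuadraticForms

variable {m : Type*} [Fintype m] [DecidableEq m]

lemma IsHermitian.card_filter_eigenvalues {C : Matrix m m ℝ} (hC : C.IsHermitian)
    (p : ℝ → Prop) [DecidablePred p] :
    #{j | p (hC.eigenvalues j)} = #{i | p (hC.eigenvalues₀ i)} :=
  card_equiv (Fintype.equivOfCardEq (Fintype.card_fin _)).symm fun j => by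
    simp only [mem_filter_univ]
    rfl

lemma isHermitian_sqrt_inv_mul_mul {A : Matrix m m ℝ} (hA : A.IsHermitian) (P : Matrix m m ℝ) :
    (CFC.sqrt P⁻¹ * A * CFC.sqrt P⁻¹).IsHermitian := by
  simpa only [(CFC.sqrt_nonneg P⁻¹).posSemidef.isHermitian.eq] using
    isHermitian_mul_mul_conjTranspose (CFC.sqrt P⁻¹) hA

lemma exists_transpose_mul_diagonal_mul {A P : Matrix m m ℝ} (hA : A.IsHermitian)
    (hP : P.PosDef) :
    ∃ R : Matrix m m ℝ, Rᵀ * R = P ∧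
      Rᵀ * diagonal (isHermitian_sqrt_inv_mul_mul hA P).eigenvalues * R = A := by
  set S := CFC.sqrt P⁻¹
  have hS : Sᵀ = S := (CFC.sqrt_nonneg P⁻¹).posSemidef.isHermitian.eq
  have hSS : S * S = P⁻¹ := CFC.sqrt_mul_sqrt_self P⁻¹ hP.inv.posSemidef.nonneg
  have hSdet : IsUnit S.det := (isUnit_iff_isUnit_det S).mp
    ((CFC.isUnit_sqrt_iff P⁻¹ hP.inv.posSemidef.nonneg).mpr hP.inv.isUnit)
  set hC := isHermitian_sqrt_inv_mul_mul hA P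
  set U : Matrix m m ℝ := (hC.eigenvectorUnitary : Matrix m m ℝ)
  have hUU : U * Uᵀ = 1 := Unitary.mul_star_self_of_mem hC.eigenvectorUnitary.2
  have hdiag : U * diagonal hC.eigenvalues * Uᵀ = S * A * S := by
    conv_rhs => rw [hC.spectral_theorem]
    simp [Unitary.conjStarAlgAut_apply, U, star_eq_conjTranspose]
  refine ⟨Uᵀ * S⁻¹, ?_, ?_⟩
  · rw [transpose_mul, transpose_transpose, transpose_nonsing_inv, hS, Matrix.mul_assoc,
      ← Matrix.mul_assoc U, hUU, Matrix.one_mul, ← Matrix.mul_inv_rev, hSS,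
      nonsing_inv_nonsing_inv P ((isUnit_iff_isUnit_det P).mp hP.isUnit)]
  · rw [transpose_mul, transpose_transpose, transpose_nonsing_inv, hS, ← Matrix.mul_assoc,
      Matrix.mul_assoc S⁻¹, Matrix.mul_assoc S⁻¹, hdiag,
      ← Matrix.mul_assoc S⁻¹ (S * A) S,
      mul_nonsing_inv_cancel_right S _ hSdet, nonsing_inv_mul_cancel_left S _ hSdet]

end Matrix

section GeneralizedEigenvalues

variable {m : Type*} [Fintype m] [DecidableEq m]

lemma genEig_eq_eigenvalues₀_rev {A P : Matrix m m ℝ} (hA : A.IsHermitian) (hP : P.PosDef)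
    (k : Fin (Fintype.card m)) :
    genEig A P k = (isHermitian_sqrt_inv_mul_mul hA P).eigenvalues₀ k.rev := by
  -- `genEig` is elaborated with the classical `DecidableEq m` instance
  obtain rfl : ‹DecidableEq m› = fun a b => Classical.propDecidable (a = b) :=
    Subsingleton.elim _ _
  classical
  set hC := isHermitian_sqrt_inv_mul_mul hA P
  set f := hC.eigenvalues₀
  have hsort : f ∘ Fin.revPerm = f ∘ Tuple.sort f := Tuple.comp_sort_eq_comp_iff_monotone.mpr
    fun a b hab => hC.eigenvalues₀_antitone (Fin.rev_le_rev.mpr hab)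
  rw [genEig, dif_pos ⟨hA, hP⟩]
  exact (congrFun hsort k).symm

lemma card_filter_eigenvalues_lt_genEig {A P : Matrix m m ℝ} (hA : A.IsHermitian)
    (hP : P.PosDef) (k : Fin (Fintype.card m)) :
    #{j | (isHermitian_sqrt_inv_mul_mul hA P).eigenvalues j < genEig A P k} ≤ k := by
  set hC := isHermitian_sqrt_inv_mul_mul hA P
  have h := hC.eigenvalues₀_antitone.card_filter_lt_apply_le k.rev
  rw [genEig_eq_eigenvalues₀_rev hA hP, hC.card_filter_eigenvalues (· < hC.eigenvalues₀ k.rev)]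
  rw [Fin.val_rev] at h
  omega

lemma card_filter_genEig_lt_eigenvalues {A P : Matrix m m ℝ} (hA : A.IsHermitian)
    (hP : P.PosDef) (k : Fin (Fintype.card m)) :
    #{j | genEig A P k < (isHermitian_sqrt_inv_mul_mul hA P).eigenvalues j} ≤
      Fintype.card m - 1 - k := by
  set hC := isHermitian_sqrt_inv_mul_mul hA P
  have h := hC.eigenvalues₀_antitone.card_filter_apply_lt_le k.rev
  rw [genEig_eq_eigenvalues₀_rev hA hP, hC.card_filter_eigenvalues (hC.eigenvalues₀ k.rev < ·)]
  rw [Fin.val_rev] at h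
  omega

lemma genEig_nonneg {A P : Matrix m m ℝ} (hA : A.PosSemidef) (hP : P.PosDef)
    (k : Fin (Fintype.card m)) : 0 ≤ genEig A P k := by
  have hS : (CFC.sqrt P⁻¹)ᴴ = CFC.sqrt P⁻¹ :=
    (CFC.sqrt_nonneg P⁻¹).posSemidef.isHermitian.eq
  have hpsd := hA.mul_mul_conjTranspose_same (CFC.sqrt P⁻¹)
  rw [hS] at hpsd
  rw [genEig_eq_eigenvalues₀_rev hA.isHermitian hP]
  simpa [IsHermitian.eigenvalues] using
    hpsd.eigenvalues_nonneg (Fintype.equivOfCardEq (Fintype.card_fin _) k.rev)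

theorem genEig_le_genEig_of_le {A P Q : Matrix m m ℝ} (hA : A.PosSemidef) (hQ : Q.PosDef)
    (hQP : Q ≤ P) (k : Fin (Fintype.card m)) : genEig A P k ≤ genEig A Q k := by
  have hP : P.PosDef := by simpa using hQ.add_posSemidef hQP
  obtain ⟨RP, hRP, hARP⟩ := exists_transpose_mul_diagonal_mul hA.isHermitian hP
  obtain ⟨RQ, hRQ, hARQ⟩ := exists_transpose_mul_diagonal_mul hA.isHermitian hQ
  obtain ⟨x, hx, hxP, hxQ⟩ := exists_ne_zero_mulVec_eq_zero RP RQ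
    {j | (isHermitian_sqrt_inv_mul_mul hA.isHermitian P).eigenvalues j < genEig A P k}
    {j | genEig A Q k < (isHermitian_sqrt_inv_mul_mul hA.isHermitian Q).eigenvalues j} (by
      have := card_filter_eigenvalues_lt_genEig hA.isHermitian hP k
      have := card_filter_genEig_lt_eigenvalues hA.isHermitian hQ k
      omega)
  have hlow : genEig A P k * (x ⬝ᵥ P *ᵥ x) ≤ x ⬝ᵥ A *ᵥ x := by
    conv_lhs => arg 2; rw [← hRP]
    conv_rhs => rw [← hARP]
    rw [dotProduct_transpose_mul_mulVec, dotProduct_transpose_mul_diagonal_mul_mulVec]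
    exact mul_sum_sq_le_sum_mul_sq fun j hj =>
      not_lt.mp fun hlt => hj (hxP j ((mem_filter_univ j).mpr hlt))
  have hup : x ⬝ᵥ A *ᵥ x ≤ genEig A Q k * (x ⬝ᵥ Q *ᵥ x) := by
    conv_lhs => rw [← hARQ]
    conv_rhs => arg 2; rw [← hRQ]
    rw [dotProduct_transpose_mul_mulVec, dotProduct_transpose_mul_diagonal_mul_mulVec]
    exact sum_mul_sq_le_mul_sum_sq fun j hj =>
      not_lt.mp fun hlt => hj (hxQ j ((mem_filter_univ j).mpr hlt))
  have hQP' : x ⬝ᵥ Q *ᵥ x ≤ x ⬝ᵥ P *ᵥ x := by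
    simpa [sub_mulVec] using hQP.dotProduct_mulVec_nonneg x
  have hpos : 0 < x ⬝ᵥ P *ᵥ x := by simpa using hP.dotProduct_mulVec_pos hx
  exact le_of_mul_le_mul_right
    (hlow.trans (hup.trans (mul_le_mul_of_nonneg_left hQP' (genEig_nonneg hA hQ k)))) hpos

end GeneralizedEigenvalues

section Lumping

variable {m : Type*} [Fintype m] [DecidableEq m]

lemma dotProduct_mulVec_le_lump {E : Matrix m m ℝ} (hE : E.IsHermitian) (x : m → ℝ) :
    x ⬝ᵥ E *ᵥ x ≤ x ⬝ᵥ lump E *ᵥ x := by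
  have hsymm : ∀ a b, E b a = E a b := fun a b => by simpa using hE.apply a b
  have hswap : ∑ a, ∑ b, |E a b| * x b ^ 2 = ∑ a, ∑ b, |E a b| * x a ^ 2 := by
    rw [sum_comm]
    simp only [hsymm]
  have hlump : x ⬝ᵥ lump E *ᵥ x = ∑ a, ∑ b, |E a b| * x a ^ 2 := by
    simp only [lump, dotProduct, mulVec_diagonal, sum_mul, mul_sum]
    exact sum_congr rfl fun a _ => sum_congr rfl fun b _ => by ring
  have hquad : x ⬝ᵥ E *ᵥ x = ∑ a, ∑ b, x a * E a b * x b := by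
    simp only [dotProduct, mulVec, mul_sum, mul_assoc]
  have hterm : ∀ a b, 2 * (x a * E a b * x b) ≤ |E a b| * x a ^ 2 + |E a b| * x b ^ 2 :=
    fun a b => by
      rcases abs_cases (E a b) with ⟨h, _⟩ | ⟨h, _⟩ <;> rw [h] <;>
        nlinarith [mul_nonneg (abs_nonneg (E a b)) (sq_nonneg (x a - x b)),
          mul_nonneg (abs_nonneg (E a b)) (sq_nonneg (x a + x b))]
  suffices 2 * x ⬝ᵥ E *ᵥ x ≤ 2 * x ⬝ᵥ lump E *ᵥ x by linarith
  calc 2 * x ⬝ᵥ E *ᵥ x = ∑ a, ∑ b, 2 * (x a * E a b * x b) := by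
        simp only [hquad, mul_sum]
    _ ≤ ∑ a, ∑ b, (|E a b| * x a ^ 2 + |E a b| * x b ^ 2) :=
        sum_le_sum fun a _ => sum_le_sum fun b _ => hterm a b
    _ = 2 * x ⬝ᵥ lump E *ᵥ x := by
        simp only [sum_add_distrib, hswap, hlump]; ring

lemma posSemidef_lump_sub {E : Matrix m m ℝ} (hE : E.IsHermitian) : (lump E - E).PosSemidef :=
  .of_dotProduct_mulVec_nonneg ((isHermitian_diagonal _).sub hE) fun x => by
    simpa [sub_mulVec] using dotProduct_mulVec_le_lump hE x

end Lumping

section Preconditioner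

variable {n : ℕ} {B : Matrix (Fin n) (Fin n) ℝ}

lemma isHermitian_diagBand (hB : B.IsHermitian) (i : ℕ) : (diagBand B i).IsHermitian := by
  ext a b
  simp only [conjTranspose_apply, diagBand, of_apply, star_trivial, abs_sub_comm ((b : ℕ) : ℤ)]
  split_ifs <;> simp [← hB.apply a b]

lemma diagBand_one (B : Matrix (Fin n) (Fin n) ℝ) : diagBand B 1 = diagonal B.diag := by
  ext a b
  rcases eq_or_ne a b with rfl | hab
  · simp [diagBand]
  · have : ((a : ℕ) : ℤ) - ((b : ℕ) : ℤ) ≠ 0 := by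
      have := Fin.val_ne_of_ne hab; omega
    simp [diagBand, this, hab]

lemma diagBand_of_le (B : Matrix (Fin n) (Fin n) ℝ) {i : ℕ} (hi : n ≤ i) :
    diagBand B i = B := by
  ext a b
  have : |((a : ℕ) : ℤ) - ((b : ℕ) : ℤ)| < i := by rw [abs_lt]; omega
  simp [diagBand, this]

lemma abs_sub_diagBand_apply (B : Matrix (Fin n) (Fin n) ℝ) (i : ℕ) (a b : Fin n) :
    |(B - diagBand B i) a b| =
      |(B - diagBand B (i + 1)) a b| + |(diagBand B (i + 1) - diagBand B i) a b| := by
  simp only [Matrix.sub_apply, diagBand, of_apply]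
  split_ifs <;> first | (exfalso; push_cast at *; linarith) | simp

lemma lump_sub_diagBand (B : Matrix (Fin n) (Fin n) ℝ) (i : ℕ) :
    lump (B - diagBand B i) =
      lump (B - diagBand B (i + 1)) + lump (diagBand B (i + 1) - diagBand B i) := by
  rw [lump, lump, lump, diagonal_add]
  congr 1
  funext a
  rw [← sum_add_distrib]
  exact sum_congr rfl fun b _ => abs_sub_diagBand_apply B i a b

lemma le_precond (hB : B.IsHermitian) (i : ℕ) : B ≤ precond B i := by
  have hR : precond B i - B = lump (B - diagBand B i) - (B - diagBand B i) := by
    rw [precond]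
    abel
  rw [le_iff, hR]
  exact posSemidef_lump_sub (hB.sub (isHermitian_diagBand hB i))

lemma posDef_precond (hB : B.PosDef) (i : ℕ) : (precond B i).PosDef := by
  simpa using hB.add_posSemidef (le_precond hB.isHermitian i)

lemma precond_succ_le (hB : B.IsHermitian) (i : ℕ) : precond B (i + 1) ≤ precond B i := by
  have hΔ : precond B i - precond B (i + 1) =
      lump (diagBand B (i + 1) - diagBand B i) - (diagBand B (i + 1) - diagBand B i) := by
    rw [precond, precond, lump_sub_diagBand]
    abel
  rw [le_iff, hΔ]
  exact posSemidef_lump_sub ((isHermitian_diagBand hB _).sub (isHermitian_diagBand hB _))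

lemma precond_one (hB : ∀ a, 0 ≤ B a a) : precond B 1 = lump B := by
  ext a b
  rcases eq_or_ne a b with rfl | hab
  · have hrow : ∀ j, |(B - diagonal B.diag) a j| = |B a j| - if a = j then B a a else 0 := by
      intro j
      rcases eq_or_ne a j with rfl | h
      · simp [abs_of_nonneg (hB a)]
      · simp [h]
    rw [precond, diagBand_one, Matrix.add_apply, lump, lump, diagonal_apply_eq, diagonal_apply_eq,
      diagonal_apply_eq, sum_congr rfl fun j _ => hrow j, sum_sub_distrib,
      sum_ite_eq, if_pos (mem_univ a), diag_apply]
    ring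
  · simp [precond, diagBand_one, lump, hab]

lemma precond_of_le (B : Matrix (Fin n) (Fin n) ℝ) {i : ℕ} (hi : n ≤ i) :
    precond B i = B := by
  simp [precond, diagBand_of_le B hi, lump]

end Preconditioner

/-- `λ_k(B, P_i) ≤ λ_k(B, P_{i+1})`, and consequently
`λ_k(K, 𝓛(B)) = λ_k(K, P_1) ≤ … ≤ λ_k(K, P_n) = λ_k(K, B)` for any SPD `K`. -/
theorem stmt_18 {n : ℕ} (B K : Matrix (Fin (n + 1)) (Fin (n + 1)) ℝ)
    (hB : B.PosDef) (hK : K.PosDef) :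
    (∀ i : ℕ, 1 ≤ i → i ≤ n → ∀ k : Fin (n + 1),
      genEigFin B (precond B i) k ≤ genEigFin B (precond B (i + 1)) k) ∧
    (∀ k : Fin (n + 1), genEigFin K (lump B) k = genEigFin K (precond B 1) k) ∧
    (∀ i : ℕ, 1 ≤ i → i ≤ n → ∀ k : Fin (n + 1),
      genEigFin K (precond B i) k ≤ genEigFin K (precond B (i + 1)) k) ∧
    (∀ k : Fin (n + 1), genEigFin K (precond B (n + 1)) k = genEigFin K B k) := by
  refine ⟨fun i _ _ k => ?_, fun k => ?_, fun i _ _ k => ?_, fun k => ?_⟩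
  · exact genEig_le_genEig_of_le hB.posSemidef (posDef_precond hB (i + 1))
      (precond_succ_le hB.isHermitian i) _
  · rw [precond_one fun a => hB.diag_pos.le]
  · exact genEig_le_genEig_of_le hK.posSemidef (posDef_precond hB (i + 1))
      (precond_succ_le hB.isHermitian i) _
  · rw [precond_of_le B le_rfl]
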